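/- For any odd positive integer p, define a near-perfect matching of {1,...,p} as a partition into (p-1)/2 two-element blocks and one singleton; the sign counts crossings between two-element blocks together with crossings where the singleton element lies strictly between the two elements of a pair. Then the signed sum over all such near-perfect matchings equals 1. -/
import Mathlib

open Finset
open scoped Classical

/-- Two blocks `e = {e.1, e.2}` (with `e.1 < e.2`) and `f` interlace iff exactly one
endpoint of `f` lies strictly between the endpoints of `e`. -/
def crossing {n : ℕ} (e f : Fin n × Fin n) : Prop :=
  (e.1 < f.1 ∧ f.1 < e.2 ∧ e.2 < f.2) ∨ (f.1 < e.1 ∧ e.1 < f.2 ∧ f.2 < e.2)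

/-- The number of interlacing (crossing) pairs of blocks of a matching. -/
noncomputable def crossNum {n : ℕ} (ζ : Finset (Fin n × Fin n)) : ℕ :=
  ((ζ ×ˢ ζ).filter fun q => q.1.1 < q.2.1 ∧ crossing q.1 q.2).card

/-- A near-perfect matching of `Fin n` (`n` odd): pairwise disjoint ordered two-element
blocks `ζ`, together with a singleton `g` not covered by `ζ`, covering everything. -/
def IsNPM {n : ℕ} (ζ : Finset (Fin n × Fin n)) (g : Fin n) : Prop :=
  (∀ e ∈ ζ, e.1 < e.2) ∧
  (∀ e ∈ ζ, g ≠ e.1 ∧ g ≠ e.2) ∧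
  (∀ x : Fin n, x ≠ g → ∃ e ∈ ζ, x = e.1 ∨ x = e.2) ∧
  (∀ e ∈ ζ, ∀ f ∈ ζ, e ≠ f → e.1 ≠ f.1 ∧ e.1 ≠ f.2 ∧ e.2 ≠ f.1 ∧ e.2 ≠ f.2)

/-- The finset of all near-perfect matchings of `Fin n`. -/
noncomputable def NPMs (n : ℕ) : Finset (Finset (Fin n × Fin n) × Fin n) :=
  univ.filter fun w => IsNPM w.1 w.2

/-- The parity of a near-perfect matching: crossings between two-element blocks,
together with crossings of the singleton `g` with a block (i.e. `g` lies strictly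
between the two elements of the block). -/
noncomputable def nsign {n : ℕ} (ζ : Finset (Fin n × Fin n)) (g : Fin n) : ℤ :=
  (-1) ^ (crossNum ζ + (ζ.filter fun e => e.1 < g ∧ g < e.2).card)

namespace NPMaux

variable {n : ℕ}

/-- Swap of two adjacent values `a` and `b = a+1` of `Fin n`. -/
def sw (a b x : Fin n) : Fin n := if x = a then b else if x = b then a else x

variable {a b x y : Fin n}

lemma sw_a : sw a b a = b := by simp [sw]

lemma sw_b (hab : (a : ℕ) + 1 = b) : sw a b b = a := by
  have : b ≠ a := by intro h; rw [h] at hab; omega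
  simp [sw, this]

lemma sw_other (hx : x ≠ a) (hx' : x ≠ b) : sw a b x = x := by simp [sw, hx, hx']

lemma sw_invol (hab : (a : ℕ) + 1 = b) : sw a b (sw a b x) = x := by
  unfold sw
  split_ifs with h1 h2 <;> simp_all [Fin.ext_iff] <;> omega

lemma sw_inj (hab : (a : ℕ) + 1 = b) (h : sw a b x = sw a b y) : x = y := by
  have := congrArg (sw a b) h
  rwa [sw_invol hab, sw_invol hab] at this

lemma sw_lt_iff (hab : (a : ℕ) + 1 = b) (hy : y ≠ a) (hy' : y ≠ b) :
    (sw a b x < y ↔ x < y) := by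
  have hy1 : (y : ℕ) ≠ a := fun h => hy (Fin.ext h)
  have hy2 : (y : ℕ) ≠ b := fun h => hy' (Fin.ext h)
  unfold sw
  split_ifs with h1 h2
  · subst h1; rw [Fin.lt_def, Fin.lt_def]; omega
  · subst h2; rw [Fin.lt_def, Fin.lt_def]; omega
  · exact Iff.rfl

lemma lt_sw_iff (hab : (a : ℕ) + 1 = b) (hy : y ≠ a) (hy' : y ≠ b) :
    (y < sw a b x ↔ y < x) := by
  have hy1 : (y : ℕ) ≠ a := fun h => hy (Fin.ext h)
  have hy2 : (y : ℕ) ≠ b := fun h => hy' (Fin.ext h)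
  unfold sw
  split_ifs with h1 h2
  · subst h1; rw [Fin.lt_def, Fin.lt_def]; omega
  · subst h2; rw [Fin.lt_def, Fin.lt_def]; omega
  · exact Iff.rfl

lemma sw_eq_iff (hab : (a : ℕ) + 1 = b) (hy : y ≠ a) (hy' : y ≠ b) :
    (sw a b x = y ↔ x = y) := by
  have hy1 : (y : ℕ) ≠ a := fun h => hy (Fin.ext h)
  have hy2 : (y : ℕ) ≠ b := fun h => hy' (Fin.ext h)
  unfold sw
  split_ifs with h1 h2
  · subst h1; rw [Fin.ext_iff, Fin.ext_iff]; omega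
  · subst h2; rw [Fin.ext_iff, Fin.ext_iff]; omega
  · exact Iff.rfl

/-- Action of the swap on ordered pairs. -/
def Fm (a b : Fin n) (e : Fin n × Fin n) : Fin n × Fin n := (sw a b e.1, sw a b e.2)

lemma Fm_invol (hab : (a : ℕ) + 1 = b) (e : Fin n × Fin n) : Fm a b (Fm a b e) = e := by
  simp [Fm, sw_invol hab]

lemma Fm_inj (hab : (a : ℕ) + 1 = b) : Function.Injective (Fm a b) := by
  intro e f h
  have h1 := congrArg Prod.fst h
  have h2 := congrArg Prod.snd h
  exact Prod.ext (sw_inj hab h1) (sw_inj hab h2)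

/-- Crossing condition is unchanged when the right block is clean. -/
lemma T_eq_right (hab : (a : ℕ) + 1 = b) {e f : Fin n × Fin n}
    (h1 : f.1 ≠ a) (h2 : f.1 ≠ b) (h3 : f.2 ≠ a) (h4 : f.2 ≠ b) :
    (((Fm a b e).1 < f.1 ∧ crossing (Fm a b e) f) ↔ (e.1 < f.1 ∧ crossing e f)) := by
  simp only [Fm, crossing, sw_lt_iff hab, lt_sw_iff hab, h1, h2, h3, h4,
    sw_lt_iff hab h1 h2, sw_lt_iff hab h3 h4, lt_sw_iff hab h1 h2, lt_sw_iff hab h3 h4]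

/-- Crossing condition is unchanged when the left block is clean. -/
lemma T_eq_left (hab : (a : ℕ) + 1 = b) {e f : Fin n × Fin n}
    (h1 : e.1 ≠ a) (h2 : e.1 ≠ b) (h3 : e.2 ≠ a) (h4 : e.2 ≠ b) :
    ((e.1 < (Fm a b f).1 ∧ crossing e (Fm a b f)) ↔ (e.1 < f.1 ∧ crossing e f)) := by
  simp only [Fm, crossing, sw_lt_iff hab h1 h2, sw_lt_iff hab h3 h4,
    lt_sw_iff hab h1 h2, lt_sw_iff hab h3 h4]

variable {ζ : Finset (Fin n × Fin n)} {g : Fin n}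

lemma sw_val (a b x : Fin n) :
    ((sw a b x : Fin n) : ℕ) = if (x:ℕ) = (a:ℕ) then (b:ℕ) else if (x:ℕ) = (b:ℕ) then (a:ℕ) else (x:ℕ) := by
  unfold sw
  split_ifs with h1 h2 h3 h4 h5 <;> simp_all [Fin.ext_iff]

lemma sw_val_eq {a b x : Fin n} {c : ℕ} (h1 : c ≠ (a : ℕ)) (h2 : c ≠ (b : ℕ)) :
    ((sw a b x : Fin n) : ℕ) = c ↔ (x : ℕ) = c := by
  rw [sw_val]; split_ifs <;> omega

lemma sw_lt_sw (hab : (a : ℕ) + 1 = b) (hxy : x < y) (hne : ¬(x = a ∧ y = b)) :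
    sw a b x < sw a b y := by
  have hxy' : (x : ℕ) < y := hxy
  have hne' : ¬((x:ℕ) = a ∧ (y:ℕ) = b) := by
    rintro ⟨h1, h2⟩; exact hne ⟨Fin.ext h1, Fin.ext h2⟩
  rw [Fin.lt_def, sw_val, sw_val]
  split_ifs <;> omega

/-- The blocks' structure is preserved by an adjacent swap as long as `(a,b)` is not a block. -/
lemma isNPM_image (hab : (a : ℕ) + 1 = b) (h : IsNPM ζ g) (hnob : (a, b) ∉ ζ) :
    IsNPM (ζ.image (Fm a b)) (sw a b g) := by
  obtain ⟨h1, h2, h3, h4⟩ := h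
  refine ⟨?_, ?_, ?_, ?_⟩
  · rintro e' he'
    obtain ⟨e, he, rfl⟩ := Finset.mem_image.mp he'
    refine sw_lt_sw hab (h1 e he) ?_
    rintro ⟨ha, hb⟩
    exact hnob (by rwa [show (a, b) = e by rw [← ha, ← hb]])
  · rintro e' he'
    obtain ⟨e, he, rfl⟩ := Finset.mem_image.mp he'
    exact ⟨fun hc => (h2 e he).1 (sw_inj hab hc), fun hc => (h2 e he).2 (sw_inj hab hc)⟩
  · intro x hx
    have hx' : sw a b x ≠ g := by
      intro hc
      exact hx (by rw [← hc, sw_invol hab])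
    obtain ⟨e, he, hc⟩ := h3 (sw a b x) hx'
    refine ⟨Fm a b e, Finset.mem_image_of_mem _ he, ?_⟩
    rcases hc with hc | hc
    · left; rw [Fm]; rw [← hc, sw_invol hab]
    · right; rw [Fm]; rw [← hc, sw_invol hab]
  · rintro e' he' f' hf' hne
    obtain ⟨e, he, rfl⟩ := Finset.mem_image.mp he'
    obtain ⟨f, hf, rfl⟩ := Finset.mem_image.mp hf'
    have hef : e ≠ f := fun hc => hne (by rw [hc])
    obtain ⟨d1, d2, d3, d4⟩ := h4 e he f hf hef
    exact ⟨fun hc => d1 (sw_inj hab hc), fun hc => d2 (sw_inj hab hc),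
      fun hc => d3 (sw_inj hab hc), fun hc => d4 (sw_inj hab hc)⟩

/-- Coordinates of distinct blocks are distinct; so each element lies in at most one block. -/
lemma block_eq_of_shared (h : IsNPM ζ g) {e f : Fin n × Fin n} (he : e ∈ ζ) (hf : f ∈ ζ)
    (hx : e.1 = f.1 ∨ e.1 = f.2 ∨ e.2 = f.1 ∨ e.2 = f.2) : e = f := by
  by_contra hne
  obtain ⟨d1, d2, d3, d4⟩ := h.2.2.2 e he f hf hne
  tauto


lemma crossing_comm {e f : Fin n × Fin n} : crossing e f ↔ crossing f e := by
  unfold crossing; tauto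

lemma crossing_self_false {e : Fin n × Fin n} : ¬ crossing e e := by
  unfold crossing; rintro (⟨h, -⟩ | ⟨h, -⟩) <;> exact lt_irrefl _ h

lemma crossNum_eq_sum (ζ : Finset (Fin n × Fin n)) :
    crossNum ζ = ∑ e ∈ ζ, ∑ f ∈ ζ, (if e.1 < f.1 ∧ crossing e f then 1 else 0) := by
  rw [crossNum, Finset.card_filter, Finset.sum_product]

lemma sum_sum_image (hab : (a : ℕ) + 1 = b) (ζ : Finset (Fin n × Fin n))
    (G : Fin n × Fin n → Fin n × Fin n → ℕ) :
    ∑ e ∈ ζ.image (Fm a b), ∑ f ∈ ζ.image (Fm a b), G e f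
      = ∑ e ∈ ζ, ∑ f ∈ ζ, G (Fm a b e) (Fm a b f) := by
  have hinj : ∀ x ∈ ζ, ∀ y ∈ ζ, Fm a b x = Fm a b y → x = y :=
    fun x _ y _ h => Fm_inj hab h
  rw [Finset.sum_image hinj]
  exact Finset.sum_congr rfl fun e _ => Finset.sum_image hinj

lemma sum_image' (hab : (a : ℕ) + 1 = b) (ζ : Finset (Fin n × Fin n))
    (G : Fin n × Fin n → ℕ) :
    ∑ e ∈ ζ.image (Fm a b), G e = ∑ e ∈ ζ, G (Fm a b e) := by
  exact Finset.sum_image fun x _ y _ h => Fm_inj hab h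

lemma crossNum_image (hab : (a : ℕ) + 1 = b) (ζ : Finset (Fin n × Fin n)) :
    crossNum (ζ.image (Fm a b)) =
      ∑ e ∈ ζ, ∑ f ∈ ζ,
        (if (Fm a b e).1 < (Fm a b f).1 ∧ crossing (Fm a b e) (Fm a b f) then 1 else 0) := by
  rw [crossNum_eq_sum, sum_sum_image hab]

lemma sCount_eq_sum (ζ : Finset (Fin n × Fin n)) (g : Fin n) :
    (ζ.filter fun e => e.1 < g ∧ g < e.2).card
      = ∑ e ∈ ζ, (if e.1 < g ∧ g < e.2 then 1 else 0) := by
  rw [Finset.card_filter]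

lemma sCount_image (hab : (a : ℕ) + 1 = b) (ζ : Finset (Fin n × Fin n)) (g : Fin n) :
    ((ζ.image (Fm a b)).filter fun e => e.1 < sw a b g ∧ sw a b g < e.2).card
      = ∑ e ∈ ζ, (if (Fm a b e).1 < sw a b g ∧ sw a b g < (Fm a b e).2 then 1 else 0) := by
  rw [sCount_eq_sum, sum_image' hab]

lemma neg_one_pow_eq_neg {X Y : ℕ} (h : Odd (X + Y)) : ((-1 : ℤ)) ^ X = -((-1 : ℤ)) ^ Y := by
  have h1 : ((-1 : ℤ)) ^ (X + Y) = -1 := Odd.neg_one_pow h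
  have h2 : ((-1 : ℤ)) ^ Y * ((-1 : ℤ)) ^ Y = 1 := by
    rw [← pow_add]; exact Even.neg_one_pow ⟨Y, rfl⟩
  calc ((-1 : ℤ)) ^ X = ((-1 : ℤ)) ^ X * (((-1 : ℤ)) ^ Y * ((-1 : ℤ)) ^ Y) := by rw [h2, mul_one]
    _ = ((-1 : ℤ)) ^ (X + Y) * ((-1 : ℤ)) ^ Y := by rw [← mul_assoc, ← pow_add]
    _ = -((-1 : ℤ)) ^ Y := by rw [h1]; ring

lemma t_pair {p q : Fin n × Fin n} (hpq : p.1 ≠ q.1) :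
    ((if p.1 < q.1 ∧ crossing p q then 1 else 0) : ℕ)
      + (if q.1 < p.1 ∧ crossing q p then 1 else 0)
      = if crossing p q then 1 else 0 := by
  rcases lt_trichotomy p.1 q.1 with h | h | h
  · have h' : ¬ q.1 < p.1 := not_lt.mpr h.le
    by_cases hc : crossing p q <;> simp [h, h', hc]
  · exact absurd h hpq
  · have h' : ¬ p.1 < q.1 := not_lt.mpr h.le
    by_cases hc : crossing p q
    · have hc' : crossing q p := crossing_comm.mp hc
      simp [h, h', hc, hc']
    · have hc' : ¬ crossing q p := fun hcc => hc (crossing_comm.mpr hcc)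
      simp [h, h', hc, hc']


/-- Crossing/order condition unchanged when `f` is clean (coords avoid `a`,`b`). -/
lemma tcond_eq_right (hab : (a : ℕ) + 1 = b) {e f : Fin n × Fin n}
    (h1 : (f.1 : ℕ) ≠ a) (h2 : (f.1 : ℕ) ≠ b) (h3 : (f.2 : ℕ) ≠ a) (h4 : (f.2 : ℕ) ≠ b) :
    (((Fm a b e).1 < (Fm a b f).1 ∧ crossing (Fm a b e) (Fm a b f)) ↔
      (e.1 < f.1 ∧ crossing e f)) := by
  simp only [crossing, Fm, Fin.lt_def, sw_val]
  split_ifs <;> omega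

lemma tcond_eq_left (hab : (a : ℕ) + 1 = b) {e f : Fin n × Fin n}
    (h1 : (e.1 : ℕ) ≠ a) (h2 : (e.1 : ℕ) ≠ b) (h3 : (e.2 : ℕ) ≠ a) (h4 : (e.2 : ℕ) ≠ b) :
    (((Fm a b e).1 < (Fm a b f).1 ∧ crossing (Fm a b e) (Fm a b f)) ↔
      (e.1 < f.1 ∧ crossing e f)) := by
  simp only [crossing, Fm, Fin.lt_def, sw_val]
  split_ifs <;> omega


set_option maxHeartbeats 3200000 in
/-- The crossing condition between the block holding `a` and the block holding `b`
is toggled by the swap. -/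
lemma crossing_toggle (hab : (a : ℕ) + 1 = b) {Ba Bb : Fin n × Fin n}
    (oBa : (Ba.1 : ℕ) < Ba.2) (oBb : (Bb.1 : ℕ) < Bb.2)
    (d1 : (Ba.1 : ℕ) ≠ Bb.1) (d2 : (Ba.1 : ℕ) ≠ Bb.2)
    (d3 : (Ba.2 : ℕ) ≠ Bb.1) (d4 : (Ba.2 : ℕ) ≠ Bb.2)
    (ha : (a : ℕ) = Ba.1 ∨ (a : ℕ) = Ba.2) (hb : (b : ℕ) = Bb.1 ∨ (b : ℕ) = Bb.2) :
    (crossing (Fm a b Ba) (Fm a b Bb) ↔ ¬ crossing Ba Bb) := by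
  rcases ha with ha | ha <;> rcases hb with hb | hb <;>
    · simp only [crossing, Fm, Fin.lt_def, sw_val]
      split_ifs <;> omega

/-- The singleton condition is unchanged when the singleton avoids `a`, `b`. -/
lemma scond_eq (hab : (a : ℕ) + 1 = b) {g : Fin n} (hg1 : (g : ℕ) ≠ a) (hg2 : (g : ℕ) ≠ b)
    (e : Fin n × Fin n) :
    (((Fm a b e).1 < sw a b g ∧ sw a b g < (Fm a b e).2) ↔ (e.1 < g ∧ g < e.2)) := by
  simp only [Fm, Fin.lt_def, sw_val]
  split_ifs <;> omega

/-- Case `g = a`: singleton condition is unchanged for clean blocks. -/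
lemma scond_ga (hab : (a : ℕ) + 1 = b) {e : Fin n × Fin n}
    (h1 : (e.1 : ℕ) ≠ a) (h2 : (e.1 : ℕ) ≠ b) (h3 : (e.2 : ℕ) ≠ a) (h4 : (e.2 : ℕ) ≠ b) :
    (((Fm a b e).1 < sw a b a ∧ sw a b a < (Fm a b e).2) ↔ (e.1 < a ∧ a < e.2)) := by
  simp only [Fm, Fin.lt_def, sw_val]
  split_ifs <;> omega

/-- Case `g = a`: singleton condition toggles at the block holding `b`. -/
lemma ssum_ga (hab : (a : ℕ) + 1 = b) {Bb : Fin n × Fin n}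
    (oBb : (Bb.1 : ℕ) < Bb.2) (h1 : (Bb.1 : ℕ) ≠ a) (h2 : (Bb.2 : ℕ) ≠ a)
    (hb : (b : ℕ) = Bb.1 ∨ (b : ℕ) = Bb.2) :
    ((if (Fm a b Bb).1 < sw a b a ∧ sw a b a < (Fm a b Bb).2 then 1 else 0) : ℕ)
      + (if Bb.1 < a ∧ a < Bb.2 then 1 else 0) = 1 := by
  rcases hb with hb | hb <;>
    · simp only [Fm, Fin.lt_def, sw_val]
      split_ifs <;> omega

/-- Case `g = b`: singleton condition is unchanged for clean blocks. -/
lemma scond_gb (hab : (a : ℕ) + 1 = b) {e : Fin n × Fin n}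
    (h1 : (e.1 : ℕ) ≠ a) (h2 : (e.1 : ℕ) ≠ b) (h3 : (e.2 : ℕ) ≠ a) (h4 : (e.2 : ℕ) ≠ b) :
    (((Fm a b e).1 < sw a b b ∧ sw a b b < (Fm a b e).2) ↔ (e.1 < b ∧ b < e.2)) := by
  simp only [Fm, Fin.lt_def, sw_val]
  split_ifs <;> omega

/-- Case `g = b`: singleton condition toggles at the block holding `a`. -/
lemma ssum_gb (hab : (a : ℕ) + 1 = b) {Ba : Fin n × Fin n}
    (oBa : (Ba.1 : ℕ) < Ba.2) (h1 : (Ba.1 : ℕ) ≠ b) (h2 : (Ba.2 : ℕ) ≠ b)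
    (ha : (a : ℕ) = Ba.1 ∨ (a : ℕ) = Ba.2) :
    ((if (Fm a b Ba).1 < sw a b b ∧ sw a b b < (Fm a b Ba).2 then 1 else 0) : ℕ)
      + (if Ba.1 < b ∧ b < Ba.2 then 1 else 0) = 1 := by
  rcases ha with ha | ha <;>
    · simp only [Fm, Fin.lt_def, sw_val]
      split_ifs <;> omega

lemma tcond_diag (e : Fin n × Fin n) (a b : Fin n) :
    (¬((Fm a b e).1 < (Fm a b e).1 ∧ crossing (Fm a b e) (Fm a b e)) ∧
      ¬(e.1 < e.1 ∧ crossing e e)) :=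
  ⟨fun hc => lt_irrefl _ hc.1, fun hc => lt_irrefl _ hc.1⟩


/-- Indicator for an ordered crossing pair, after the swap. -/
noncomputable def tF (a b : Fin n) (e f : Fin n × Fin n) : ℕ :=
  if (Fm a b e).1 < (Fm a b f).1 ∧ crossing (Fm a b e) (Fm a b f) then 1 else 0

/-- Indicator for an ordered crossing pair. -/
noncomputable def tN (e f : Fin n × Fin n) : ℕ :=
  if e.1 < f.1 ∧ crossing e f then 1 else 0

/-- Indicator for the singleton lying inside a block, after the swap. -/
noncomputable def sF (a b g : Fin n) (e : Fin n × Fin n) : ℕ :=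
  if (Fm a b e).1 < sw a b g ∧ sw a b g < (Fm a b e).2 then 1 else 0

/-- Indicator for the singleton lying inside a block. -/
noncomputable def sN (g : Fin n) (e : Fin n × Fin n) : ℕ :=
  if e.1 < g ∧ g < e.2 then 1 else 0

lemma crossNum_eq_sumP (ζ : Finset (Fin n × Fin n)) :
    crossNum ζ = ∑ q ∈ ζ ×ˢ ζ, tN q.1 q.2 := by
  rw [crossNum, Finset.card_filter]; rfl

lemma crossNum_image_eq (hab : (a : ℕ) + 1 = b) (ζ : Finset (Fin n × Fin n)) :
    crossNum (ζ.image (Fm a b)) = ∑ q ∈ ζ ×ˢ ζ, tF a b q.1 q.2 := by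
  rw [crossNum_image hab, ← Finset.sum_product']; rfl

lemma sCount_eq_sumP (ζ : Finset (Fin n × Fin n)) (g : Fin n) :
    (ζ.filter fun e => e.1 < g ∧ g < e.2).card = ∑ e ∈ ζ, sN g e := by
  rw [Finset.card_filter]; rfl

lemma sCount_image_eq (hab : (a : ℕ) + 1 = b) (ζ : Finset (Fin n × Fin n)) (g : Fin n) :
    ((ζ.image (Fm a b)).filter fun e => e.1 < sw a b g ∧ sw a b g < e.2).card
      = ∑ e ∈ ζ, sF a b g e := by
  rw [sCount_image hab]; rfl

/-- If `x` lies in the block `B` of an NPM, no other block touches `x`. -/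
lemma coords_ne (h : IsNPM ζ g) {B e : Fin n × Fin n} {x : Fin n}
    (hB : B ∈ ζ) (hx : x = B.1 ∨ x = B.2) (he : e ∈ ζ) (hne : e ≠ B) :
    (e.1 : ℕ) ≠ x ∧ (e.2 : ℕ) ≠ x := by
  constructor <;> intro hc
  · refine hne (block_eq_of_shared h he hB ?_)
    rcases hx with hx | hx
    · exact Or.inl ((Fin.ext hc).trans hx)
    · exact Or.inr (Or.inl ((Fin.ext hc).trans hx))
  · refine hne (block_eq_of_shared h he hB ?_)
    rcases hx with hx | hx
    · exact Or.inr (Or.inr (Or.inl ((Fin.ext hc).trans hx)))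
    · exact Or.inr (Or.inr (Or.inr ((Fin.ext hc).trans hx)))


variable {a b : Fin n}

/-- Key parity statement: the swap changes the total count by an odd amount. -/
lemma odd_key (hab : (a : ℕ) + 1 = b) (h : IsNPM ζ g) (hnob : (a, b) ∉ ζ) :
    Odd ((∑ q ∈ ζ ×ˢ ζ, (tF a b q.1 q.2 + tN q.1 q.2)) + (∑ e ∈ ζ, (sF a b g e + sN g e))) := by
  classical
  obtain ⟨horder, hsing, hcover, hdist⟩ := h
  have hba : b ≠ a := by intro hc; rw [hc] at hab; omega
  by_cases hga : g = a
  · -- the singleton is `a`; `b` lies in a block `Bb`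
    subst hga
    obtain ⟨Bb, hBb, hbBb⟩ := hcover b hba
    have oBb : (Bb.1 : ℕ) < Bb.2 := horder Bb hBb
    have hBb1a : (Bb.1 : ℕ) ≠ g := fun hc => (hsing Bb hBb).1 (Fin.ext hc.symm)
    have hBb2a : (Bb.2 : ℕ) ≠ g := fun hc => (hsing Bb hBb).2 (Fin.ext hc.symm)
    have hclean : ∀ e ∈ ζ, e ≠ Bb →
        (e.1 : ℕ) ≠ g ∧ (e.1 : ℕ) ≠ b ∧ (e.2 : ℕ) ≠ g ∧ (e.2 : ℕ) ≠ b := by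
      intro e he hne
      have h1 : (e.1 : ℕ) ≠ g := fun hc => (hsing e he).1 (Fin.ext hc.symm)
      have h2 : (e.2 : ℕ) ≠ g := fun hc => (hsing e he).2 (Fin.ext hc.symm)
      have hb' := coords_ne ⟨horder, hsing, hcover, hdist⟩ hBb hbBb he hne
      exact ⟨h1, hb'.1, h2, hb'.2⟩
    have hT : ∀ q ∈ ζ ×ˢ ζ, tF g b q.1 q.2 + tN q.1 q.2 = 2 * tN q.1 q.2 := by
      rintro ⟨e, f⟩ hq
      rw [Finset.mem_product] at hq
      suffices hiff : ((Fm g b e).1 < (Fm g b f).1 ∧ crossing (Fm g b e) (Fm g b f)) ↔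
          (e.1 < f.1 ∧ crossing e f) by
        unfold tF tN; rw [if_congr hiff rfl rfl]; ring
      by_cases hfBb : f = Bb
      · by_cases hef : e = f
        · subst hef
          exact iff_of_false (tcond_diag e g b).1 (tcond_diag e g b).2
        · subst hfBb
          obtain ⟨c1, c2, c3, c4⟩ := hclean e hq.1 hef
          exact tcond_eq_left hab c1 c2 c3 c4
      · obtain ⟨c1, c2, c3, c4⟩ := hclean f hq.2 hfBb
        exact tcond_eq_right hab c1 c2 c3 c4
    have hS1 : ∑ q ∈ ζ ×ˢ ζ, (tF g b q.1 q.2 + tN q.1 q.2)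
        = 2 * ∑ q ∈ ζ ×ˢ ζ, tN q.1 q.2 := by
      rw [Finset.mul_sum]; exact Finset.sum_congr rfl hT
    have hS2 : (sF g b g Bb + sN g Bb) + ∑ e ∈ ζ.erase Bb, (sF g b g e + sN g e)
        = ∑ e ∈ ζ, (sF g b g e + sN g e) :=
      Finset.add_sum_erase ζ (fun e => sF g b g e + sN g e) hBb
    have hcell : sF g b g Bb + sN g Bb = 1 :=
      ssum_ga hab oBb hBb1a hBb2a (hbBb.imp (congrArg Fin.val) (congrArg Fin.val))
    have hrest : ∀ e ∈ ζ.erase Bb, sF g b g e + sN g e = 2 * sN g e := by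
      intro e he
      obtain ⟨hne, he'⟩ := Finset.mem_erase.mp he
      obtain ⟨c1, c2, c3, c4⟩ := hclean e he' hne
      unfold sF sN
      rw [if_congr (scond_ga hab c1 c2 c3 c4) rfl rfl]; ring
    have hS3 : ∑ e ∈ ζ.erase Bb, (sF g b g e + sN g e)
        = 2 * ∑ e ∈ ζ.erase Bb, sN g e := by
      rw [Finset.mul_sum]; exact Finset.sum_congr rfl hrest
    rw [hS1, ← hS2, hcell, hS3, Nat.odd_iff]; omega
  · by_cases hgb : g = b
    · -- the singleton is `b`; `a` lies in a block `Ba`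
      subst hgb
      have hag : a ≠ g := fun hc => hga hc.symm
      obtain ⟨Ba, hBa, haBa⟩ := hcover a hag
      have oBa : (Ba.1 : ℕ) < Ba.2 := horder Ba hBa
      have hBa1b : (Ba.1 : ℕ) ≠ g := fun hc => (hsing Ba hBa).1 (Fin.ext hc.symm)
      have hBa2b : (Ba.2 : ℕ) ≠ g := fun hc => (hsing Ba hBa).2 (Fin.ext hc.symm)
      have hclean : ∀ e ∈ ζ, e ≠ Ba →
          (e.1 : ℕ) ≠ a ∧ (e.1 : ℕ) ≠ g ∧ (e.2 : ℕ) ≠ a ∧ (e.2 : ℕ) ≠ g := by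
        intro e he hne
        have h1 : (e.1 : ℕ) ≠ g := fun hc => (hsing e he).1 (Fin.ext hc.symm)
        have h2 : (e.2 : ℕ) ≠ g := fun hc => (hsing e he).2 (Fin.ext hc.symm)
        have ha' := coords_ne ⟨horder, hsing, hcover, hdist⟩ hBa haBa he hne
        exact ⟨ha'.1, h1, ha'.2, h2⟩
      have hT : ∀ q ∈ ζ ×ˢ ζ, tF a g q.1 q.2 + tN q.1 q.2 = 2 * tN q.1 q.2 := by
        rintro ⟨e, f⟩ hq
        rw [Finset.mem_product] at hq
        suffices hiff : ((Fm a g e).1 < (Fm a g f).1 ∧ crossing (Fm a g e) (Fm a g f)) ↔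
            (e.1 < f.1 ∧ crossing e f) by
          unfold tF tN; rw [if_congr hiff rfl rfl]; ring
        by_cases hfBa : f = Ba
        · by_cases hef : e = f
          · subst hef
            exact iff_of_false (tcond_diag e a g).1 (tcond_diag e a g).2
          · subst hfBa
            obtain ⟨c1, c2, c3, c4⟩ := hclean e hq.1 hef
            exact tcond_eq_left hab c1 c2 c3 c4
        · obtain ⟨c1, c2, c3, c4⟩ := hclean f hq.2 hfBa
          exact tcond_eq_right hab c1 c2 c3 c4
      have hS1 : ∑ q ∈ ζ ×ˢ ζ, (tF a g q.1 q.2 + tN q.1 q.2)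
          = 2 * ∑ q ∈ ζ ×ˢ ζ, tN q.1 q.2 := by
        rw [Finset.mul_sum]; exact Finset.sum_congr rfl hT
      have hS2 : (sF a g g Ba + sN g Ba) + ∑ e ∈ ζ.erase Ba, (sF a g g e + sN g e)
          = ∑ e ∈ ζ, (sF a g g e + sN g e) :=
        Finset.add_sum_erase ζ (fun e => sF a g g e + sN g e) hBa
      have hcell : sF a g g Ba + sN g Ba = 1 :=
        ssum_gb hab oBa hBa1b hBa2b (haBa.imp (congrArg Fin.val) (congrArg Fin.val))
      have hrest : ∀ e ∈ ζ.erase Ba, sF a g g e + sN g e = 2 * sN g e := by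
        intro e he
        obtain ⟨hne, he'⟩ := Finset.mem_erase.mp he
        obtain ⟨c1, c2, c3, c4⟩ := hclean e he' hne
        unfold sF sN
        rw [if_congr (scond_gb hab c1 c2 c3 c4) rfl rfl]; ring
      have hS3 : ∑ e ∈ ζ.erase Ba, (sF a g g e + sN g e)
          = 2 * ∑ e ∈ ζ.erase Ba, sN g e := by
        rw [Finset.mul_sum]; exact Finset.sum_congr rfl hrest
      rw [hS1, ← hS2, hcell, hS3, Nat.odd_iff]; omega
    · -- both `a` and `b` lie in blocks `Ba ≠ Bb`
      have hag : a ≠ g := fun hc => hga hc.symm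
      have hbg : b ≠ g := fun hc => hgb hc.symm
      obtain ⟨Ba, hBa, haBa⟩ := hcover a hag
      obtain ⟨Bb, hBb, hbBb⟩ := hcover b hbg
      have oBa : (Ba.1 : ℕ) < Ba.2 := horder Ba hBa
      have oBb : (Bb.1 : ℕ) < Bb.2 := horder Bb hBb
      have hBab : Ba ≠ Bb := by
        rintro rfl
        rcases haBa with h1 | h1 <;> rcases hbBb with h2 | h2 <;>
          [ (have h1' := congrArg Fin.val h1; have h2' := congrArg Fin.val h2; omega);
            exact hnob (by rw [show (a, b) = Ba from Prod.ext h1 h2]; exact hBa);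
            (have h1' := congrArg Fin.val h1; have h2' := congrArg Fin.val h2; omega);
            (have h1' := congrArg Fin.val h1; have h2' := congrArg Fin.val h2; omega)]
      obtain ⟨d1, d2, d3, d4⟩ := hdist Ba hBa Bb hBb hBab
      have d1' : (Ba.1 : ℕ) ≠ Bb.1 := fun hc => d1 (Fin.ext hc)
      have d2' : (Ba.1 : ℕ) ≠ Bb.2 := fun hc => d2 (Fin.ext hc)
      have d3' : (Ba.2 : ℕ) ≠ Bb.1 := fun hc => d3 (Fin.ext hc)
      have d4' : (Ba.2 : ℕ) ≠ Bb.2 := fun hc => d4 (Fin.ext hc)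
      have hgav : (g : ℕ) ≠ a := fun hc => hga (Fin.ext hc)
      have hgbv : (g : ℕ) ≠ b := fun hc => hgb (Fin.ext hc)
      -- the singleton terms are unchanged
      have hrest : ∀ e ∈ ζ, sF a b g e + sN g e = 2 * sN g e := by
        intro e _
        unfold sF sN
        rw [if_congr (scond_eq hab hgav hgbv e) rfl rfl]; ring
      have hS3 : ∑ e ∈ ζ, (sF a b g e + sN g e) = 2 * ∑ e ∈ ζ, sN g e := by
        rw [Finset.mul_sum]; exact Finset.sum_congr rfl hrest
      -- clean blocks
      have hcleanA : ∀ e ∈ ζ, e ≠ Ba → (e.1 : ℕ) ≠ a ∧ (e.2 : ℕ) ≠ a := fun e he hne =>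
        coords_ne ⟨horder, hsing, hcover, hdist⟩ hBa haBa he hne
      have hcleanB : ∀ e ∈ ζ, e ≠ Bb → (e.1 : ℕ) ≠ b ∧ (e.2 : ℕ) ≠ b := fun e he hne =>
        coords_ne ⟨horder, hsing, hcover, hdist⟩ hBb hbBb he hne
      -- split the two special cells from the product sum
      have hmem1 : (Ba, Bb) ∈ ζ ×ˢ ζ := Finset.mem_product.mpr ⟨hBa, hBb⟩
      have hmem2 : (Bb, Ba) ∈ (ζ ×ˢ ζ).erase (Ba, Bb) := by
        refine Finset.mem_erase.mpr ⟨?_, Finset.mem_product.mpr ⟨hBb, hBa⟩⟩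
        intro hc
        exact hBab (congrArg Prod.fst hc).symm
      set u : (Fin n × Fin n) × (Fin n × Fin n) → ℕ :=
        fun q => tF a b q.1 q.2 + tN q.1 q.2 with hu
      have hsplit1 : u (Bb, Ba) + ∑ q ∈ ((ζ ×ˢ ζ).erase (Ba, Bb)).erase (Bb, Ba), u q
          = ∑ q ∈ (ζ ×ˢ ζ).erase (Ba, Bb), u q :=
        Finset.add_sum_erase _ u hmem2
      have hsplit2 : u (Ba, Bb) + ∑ q ∈ (ζ ×ˢ ζ).erase (Ba, Bb), u q
          = ∑ q ∈ ζ ×ˢ ζ, u q :=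
        Finset.add_sum_erase _ u hmem1
      -- the remaining cells are unchanged
      have hTrest : ∀ q ∈ ((ζ ×ˢ ζ).erase (Ba, Bb)).erase (Bb, Ba), u q = 2 * tN q.1 q.2 := by
        rintro ⟨e, f⟩ hq
        have hq1 : e ∈ ζ :=
          (Finset.mem_product.mp (Finset.mem_of_mem_erase (Finset.mem_of_mem_erase hq))).1
        have hq2 : f ∈ ζ :=
          (Finset.mem_product.mp (Finset.mem_of_mem_erase (Finset.mem_of_mem_erase hq))).2
        have hne2 : (e, f) ≠ (Bb, Ba) := Finset.ne_of_mem_erase hq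
        have hne1 : (e, f) ≠ (Ba, Bb) := Finset.ne_of_mem_erase (Finset.mem_of_mem_erase hq)
        suffices hiff : ((Fm a b e).1 < (Fm a b f).1 ∧ crossing (Fm a b e) (Fm a b f)) ↔
            (e.1 < f.1 ∧ crossing e f) by
          rw [hu]; dsimp only; unfold tF tN; rw [if_congr hiff rfl rfl]; ring
        by_cases hef : e = f
        · subst hef
          exact iff_of_false (tcond_diag e a b).1 (tcond_diag e a b).2
        by_cases hfA : f = Ba
        · -- then e ≠ Bb (cell excluded) and e ≠ Ba (since e ≠ f)
          subst hfA
          have heB : e ≠ Bb := fun hc => hne2 (by rw [hc])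
          obtain ⟨c1, c3⟩ := hcleanA e hq1 hef
          obtain ⟨c2, c4⟩ := hcleanB e hq1 heB
          exact tcond_eq_left hab c1 c2 c3 c4
        by_cases hfB : f = Bb
        · subst hfB
          have heA : e ≠ Ba := fun hc => hne1 (by rw [hc])
          obtain ⟨c1, c3⟩ := hcleanA e hq1 heA
          obtain ⟨c2, c4⟩ := hcleanB e hq1 hef
          exact tcond_eq_left hab c1 c2 c3 c4
        · obtain ⟨c1, c3⟩ := hcleanA f hq2 hfA
          obtain ⟨c2, c4⟩ := hcleanB f hq2 hfB
          exact tcond_eq_right hab c1 c2 c3 c4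
      have hS4 : ∑ q ∈ ((ζ ×ˢ ζ).erase (Ba, Bb)).erase (Bb, Ba), u q
          = 2 * ∑ q ∈ ((ζ ×ˢ ζ).erase (Ba, Bb)).erase (Bb, Ba), tN q.1 q.2 := by
        rw [Finset.mul_sum]; exact Finset.sum_congr rfl hTrest
      -- the two special cells contribute exactly 1
      have hne1F : (Fm a b Ba).1 ≠ (Fm a b Bb).1 := fun hc => d1 (sw_inj hab hc)
      have v1 : tN Ba Bb + tN Bb Ba = if crossing Ba Bb then 1 else 0 :=
        t_pair fun hc => d1 hc
      have v2 : tF a b Ba Bb + tF a b Bb Ba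
          = if crossing (Fm a b Ba) (Fm a b Bb) then 1 else 0 :=
        t_pair hne1F
      have v3 : crossing (Fm a b Ba) (Fm a b Bb) ↔ ¬ crossing Ba Bb :=
        crossing_toggle hab oBa oBb d1' d2' d3' d4'
          (haBa.imp (congrArg Fin.val) (congrArg Fin.val))
          (hbBb.imp (congrArg Fin.val) (congrArg Fin.val))
      have hcells : u (Ba, Bb) + u (Bb, Ba) = 1 := by
        rw [hu]; dsimp only
        by_cases hc : crossing Ba Bb
        · have hc' : ¬ crossing (Fm a b Ba) (Fm a b Bb) := fun hx => (v3.mp hx) hc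
          rw [if_pos hc] at v1; rw [if_neg hc'] at v2; omega
        · have hc' : crossing (Fm a b Ba) (Fm a b Bb) := v3.mpr hc
          rw [if_neg hc] at v1; rw [if_pos hc'] at v2; omega
      rw [hS3, ← hsplit2, ← hsplit1, hS4, Nat.odd_iff]
      omega


/-- The swap of two adjacent values (not forming a block) flips the sign. -/
lemma nsign_image (hab : (a : ℕ) + 1 = b) (h : IsNPM ζ g) (hnob : (a, b) ∉ ζ) :
    nsign (ζ.image (Fm a b)) (sw a b g) = - nsign ζ g := by
  unfold nsign
  rw [crossNum_image_eq hab, sCount_image_eq hab, crossNum_eq_sumP, sCount_eq_sumP]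
  apply neg_one_pow_eq_neg
  have hkey := odd_key hab h hnob
  rw [Finset.sum_add_distrib, Finset.sum_add_distrib] at hkey
  rw [Nat.odd_iff] at hkey ⊢
  omega


/-! ### The canonical fixed point and the selection data -/

variable (m : ℕ)

/-- The rainbow near-perfect matching: singleton `0`, blocks `(i+1, 2m-i)`. -/
noncomputable def w0 : Finset (Fin (2*m+1) × Fin (2*m+1)) × Fin (2*m+1) :=
  ((Finset.univ : Finset (Fin m)).image (fun (i : Fin m) =>
      ((⟨(i : ℕ)+1, by have := i.isLt; omega⟩ : Fin (2*m+1)),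
        (⟨2*m-(i : ℕ), by omega⟩ : Fin (2*m+1)))),
    ⟨0, by omega⟩)

/-- `Rb m w c` : the `c`-th rainbow item is present in `w`. -/
def Rb (w : Finset (Fin (2*m+1) × Fin (2*m+1)) × Fin (2*m+1)) (c : ℕ) : Prop :=
  if c = 0 then w.2 = (⟨0, by omega⟩ : Fin (2*m+1))
  else ∃ e ∈ w.1, (e.1 : ℕ) = c ∧ (e.2 : ℕ) = 2*m+1-c

lemma exists_not_Rb (w : Finset (Fin (2*m+1) × Fin (2*m+1)) × Fin (2*m+1))
    (hw : IsNPM w.1 w.2) : ∃ c, ¬ Rb m w c := by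
  refine ⟨m+1, ?_⟩
  rw [Rb, if_neg (by omega)]
  rintro ⟨e, he, h1, h2⟩
  have := hw.1 e he
  rw [Fin.lt_def] at this
  omega

/-- Depth of a configuration: the first missing rainbow item. -/
noncomputable def kN (w : Finset (Fin (2*m+1) × Fin (2*m+1)) × Fin (2*m+1)) : ℕ :=
  if h : ∃ c, ¬ Rb m w c then Nat.find h else 0

/-- The partner of the element `kN w`. -/
noncomputable def jN (w : Finset (Fin (2*m+1) × Fin (2*m+1)) × Fin (2*m+1)) : ℕ :=
  (w.1.filter (fun x => (x.1 : ℕ) = kN m w)).sup (fun x => (x.2 : ℕ))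

/-- The swap position. -/
noncomputable def aN (w : Finset (Fin (2*m+1) × Fin (2*m+1)) × Fin (2*m+1)) : ℕ :=
  if (jN m w - kN m w) % 2 = 1 then jN m w else jN m w - 1

/-- The involution. -/
noncomputable def invW (w : Finset (Fin (2*m+1) × Fin (2*m+1)) × Fin (2*m+1)) :
    Finset (Fin (2*m+1) × Fin (2*m+1)) × Fin (2*m+1) :=
  if h : aN m w + 1 < 2*m+1 then
    (w.1.image (Fm ⟨aN m w, by omega⟩ ⟨aN m w + 1, h⟩),
      sw ⟨aN m w, by omega⟩ ⟨aN m w + 1, h⟩ w.2)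
  else w

lemma kN_eq (w : Finset (Fin (2*m+1) × Fin (2*m+1)) × Fin (2*m+1))
    (hw : IsNPM w.1 w.2) :
    ¬ Rb m w (kN m w) ∧ ∀ c < kN m w, Rb m w c := by
  rw [kN, dif_pos (exists_not_Rb m w hw)]
  exact ⟨Nat.find_spec (exists_not_Rb m w hw),
    fun c hc => by
      have := Nat.find_min (exists_not_Rb m w hw) hc
      exact not_not.mp this⟩

lemma jN_spec (w : Finset (Fin (2*m+1) × Fin (2*m+1)) × Fin (2*m+1))
    (hw : IsNPM w.1 w.2) {e : Fin (2*m+1) × Fin (2*m+1)}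
    (he : e ∈ w.1) (hek : (e.1 : ℕ) = kN m w) : jN m w = (e.2 : ℕ) := by
  have hfilter : w.1.filter (fun x => (x.1 : ℕ) = kN m w) = {e} := by
    apply Finset.ext
    intro x
    rw [Finset.mem_filter, Finset.mem_singleton]
    constructor
    · rintro ⟨hx, hxv⟩
      exact block_eq_of_shared hw hx he (Or.inl (Fin.ext (hxv.trans hek.symm)))
    · rintro rfl
      exact ⟨he, hek⟩
  rw [jN, hfilter, Finset.sup_singleton]


lemma mem_w0_iff {m : ℕ} {e : Fin (2*m+1) × Fin (2*m+1)} :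
    e ∈ (w0 m).1 ↔ ∃ i : ℕ, i < m ∧ (e.1 : ℕ) = i + 1 ∧ (e.2 : ℕ) = 2*m - i := by
  rw [w0]
  simp only [Finset.mem_image, Finset.mem_univ, true_and]
  constructor
  · rintro ⟨i, rfl⟩
    exact ⟨(i : ℕ), i.isLt, rfl, rfl⟩
  · rintro ⟨i, hi, h1, h2⟩
    refine ⟨⟨i, hi⟩, ?_⟩
    have : e = (e.1, e.2) := rfl
    rw [this]
    refine Prod.ext (Fin.ext ?_) (Fin.ext ?_) <;> simp [h1, h2]

lemma isNPM_w0 (m : ℕ) : IsNPM (w0 m).1 (w0 m).2 := by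
  refine ⟨?_, ?_, ?_, ?_⟩
  · intro e he
    obtain ⟨i, hi, h1, h2⟩ := mem_w0_iff.mp he
    rw [Fin.lt_def]; omega
  · intro e he
    obtain ⟨i, hi, h1, h2⟩ := mem_w0_iff.mp he
    constructor <;> intro hc <;>
      (have := congrArg Fin.val hc; rw [show ((w0 m).2 : ℕ) = 0 from rfl] at this; omega)
  · intro x hx
    have hx' : (x : ℕ) ≠ 0 := fun hc => hx (Fin.ext hc)
    have hxlt : (x : ℕ) < 2*m+1 := x.isLt
    by_cases hxm : (x : ℕ) ≤ m
    · refine ⟨(x, ⟨2*m - ((x:ℕ) - 1), by omega⟩),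
        mem_w0_iff.mpr ⟨(x:ℕ) - 1, by omega, by simp; omega, by simp⟩, Or.inl rfl⟩
    · refine ⟨(⟨2*m + 1 - (x:ℕ), by omega⟩, x),
        mem_w0_iff.mpr ⟨2*m - (x:ℕ), by omega, by simp; omega, by simp; omega⟩, Or.inr rfl⟩
  · intro e he f hf hef
    obtain ⟨i, hi, h1, h2⟩ := mem_w0_iff.mp he
    obtain ⟨i', hi', h1', h2'⟩ := mem_w0_iff.mp hf
    have hii : i ≠ i' := by
      intro hc
      apply hef
      subst hc
      have he1 : e.1 = f.1 := Fin.ext (by omega)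
      have he2 : e.2 = f.2 := Fin.ext (by omega)
      exact Prod.ext he1 he2
    refine ⟨?_, ?_, ?_, ?_⟩ <;> intro hc <;> (have := congrArg Fin.val hc; omega)

lemma nsign_w0 (m : ℕ) : nsign (w0 m).1 (w0 m).2 = 1 := by
  have hc : crossNum (w0 m).1 = 0 := by
    rw [crossNum, Finset.card_eq_zero, Finset.filter_eq_empty_iff]
    rintro ⟨e, f⟩ hq
    rw [Finset.mem_product] at hq
    obtain ⟨i, hi, h1, h2⟩ := mem_w0_iff.mp hq.1
    obtain ⟨i', hi', h1', h2'⟩ := mem_w0_iff.mp hq.2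
    rintro ⟨ho, hcr⟩
    rw [Fin.lt_def] at ho
    rcases hcr with ⟨c1, c2, c3⟩ | ⟨c1, c2, c3⟩ <;>
      (rw [Fin.lt_def] at c1 c2 c3; omega)
  have hs : ((w0 m).1.filter fun e => e.1 < (w0 m).2 ∧ (w0 m).2 < e.2).card = 0 := by
    rw [Finset.card_eq_zero, Finset.filter_eq_empty_iff]
    intro e he
    rintro ⟨hlt, -⟩
    rw [Fin.lt_def, show (((w0 m).2) : ℕ) = 0 from rfl] at hlt
    omega
  rw [nsign, hc, hs]
  norm_num

lemma Rb_w0 (m : ℕ) {c : ℕ} (hc : c ≤ m) : Rb m (w0 m) c := by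
  rw [Rb]
  by_cases h0 : c = 0
  · rw [if_pos h0]; rfl
  · rw [if_neg h0]
    refine ⟨(⟨c, by omega⟩, ⟨2*m+1-c, by omega⟩), ?_, rfl, rfl⟩
    exact mem_w0_iff.mpr ⟨c - 1, by omega, by simp; omega, by simp; omega⟩

lemma all_Rb_imp_eq {m : ℕ} {w : Finset (Fin (2*m+1) × Fin (2*m+1)) × Fin (2*m+1)}
    (hw : IsNPM w.1 w.2) (hall : ∀ c, c ≤ m → Rb m w c) : w = w0 m := by
  have hg : w.2 = (⟨0, by omega⟩ : Fin (2*m+1)) := by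
    have := hall 0 (by omega)
    rwa [Rb, if_pos rfl] at this
  have hsub1 : w.1 ⊆ (w0 m).1 := by
    intro e he
    have hne : e.1 ≠ w.2 := fun hc => (hw.2.1 e he).1 hc.symm
    have hne1 : (e.1 : ℕ) ≠ 0 := by
      intro hc; exact hne (by rw [hg]; exact Fin.ext hc)
    have hlt : (e.1 : ℕ) < 2*m+1 := e.1.isLt
    have horder : (e.1 : ℕ) < (e.2 : ℕ) := hw.1 e he
    have hlt2 : (e.2 : ℕ) < 2*m+1 := e.2.isLt
    by_cases hm : (e.1 : ℕ) ≤ m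
    · obtain ⟨r, hr, hr1, hr2⟩ := by
        have := hall (e.1 : ℕ) hm
        rwa [Rb, if_neg hne1] at this
      have : e = r := block_eq_of_shared hw he hr (Or.inl (Fin.ext hr1.symm))
      subst this
      exact mem_w0_iff.mpr ⟨(e.1 : ℕ) - 1, by omega, by omega, by omega⟩
    · -- e.1 > m : impossible, since then e.2 > e.1 > m and both would be
      -- second coordinates of rainbow blocks
      exfalso
      have hu : 2*m+1-(e.1:ℕ) ≤ m := by omega
      have hu0 : ¬ (2*m+1-(e.1:ℕ) = 0) := by omega
      obtain ⟨r, hr, hr1, hr2⟩ := by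
        have := hall (2*m+1-(e.1:ℕ)) hu
        rwa [Rb, if_neg hu0] at this
      have hv : (r.2 : ℕ) = (e.1 : ℕ) := by omega
      have : e = r := block_eq_of_shared hw he hr (Or.inr (Or.inl (Fin.ext hv.symm)))
      subst this
      omega
  have hsub2 : (w0 m).1 ⊆ w.1 := by
    intro r hr
    obtain ⟨i, hi, h1, h2⟩ := mem_w0_iff.mp hr
    obtain ⟨r', hr', hr1, hr2⟩ := by
      have := hall (i+1) (by omega)
      rwa [Rb, if_neg (by omega)] at this
    have : r = r' := by
      have e1 : r.1 = r'.1 := Fin.ext (by omega)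
      have e2 : r.2 = r'.2 := Fin.ext (by omega)
      exact Prod.ext e1 e2
    rw [this]; exact hr'
  exact Prod.ext (Finset.Subset.antisymm hsub1 hsub2) hg


/-- Main structural facts about the selection data of a non-rainbow NPM. -/
lemma sel_spec {m : ℕ} {w : Finset (Fin (2*m+1) × Fin (2*m+1)) × Fin (2*m+1)}
    (hw : IsNPM w.1 w.2) (hne : w ≠ w0 m) :
    kN m w ≤ m ∧ ∃ e ∈ w.1, (e.1 : ℕ) = kN m w ∧ (e.2 : ℕ) = jN m w ∧
      kN m w + 1 ≤ jN m w ∧ jN m w ≤ 2*m - kN m w := by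
  obtain ⟨hkspec, hkmin⟩ := kN_eq m w hw
  have hkm : kN m w ≤ m := by
    by_contra h
    exact hne (all_Rb_imp_eq hw (fun c hc => hkmin c (by omega)))
  refine ⟨hkm, ?_⟩
  -- find the partner block
  have hblock : ∃ e ∈ w.1, (e.1 : ℕ) = kN m w := by
    by_cases hk0 : kN m w = 0
    · have hg : w.2 ≠ (⟨0, by omega⟩ : Fin (2*m+1)) := by
        intro hc; rw [Rb, hk0, if_pos rfl] at hkspec; exact hkspec hc
      obtain ⟨e, he, hor⟩ := hw.2.2.1 ⟨0, by omega⟩ (fun hc => hg hc.symm)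
      rcases hor with h0 | h0
      · exact ⟨e, he, by rw [← h0, hk0]⟩
      · exfalso
        have := hw.1 e he
        rw [Fin.lt_def, ← h0] at this
        simp at this
    · have hg : w.2 = (⟨0, by omega⟩ : Fin (2*m+1)) := by
        have := hkmin 0 (by omega)
        rwa [Rb, if_pos rfl] at this
      obtain ⟨e, he, hor⟩ := hw.2.2.1 ⟨kN m w, by omega⟩
        (by intro hc; rw [hg] at hc; exact hk0 (congrArg Fin.val hc))
      rcases hor with h0 | h0
      · exact ⟨e, he, by rw [← h0]⟩
      · exfalso
        have horder : (e.1 : ℕ) < (e.2 : ℕ) := hw.1 e he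
        have he2 : (e.2 : ℕ) = kN m w := by rw [← h0]
        have he1g : e.1 ≠ w.2 := fun hc => (hw.2.1 e he).1 hc.symm
        have he1 : (e.1 : ℕ) ≠ 0 := by
          intro hc; exact he1g (by rw [hg]; exact Fin.ext hc)
        have hRb : Rb m w (e.1 : ℕ) := hkmin (e.1 : ℕ) (by omega)
        rw [Rb, if_neg he1] at hRb
        obtain ⟨r, hr, hr1, hr2⟩ := hRb
        have her : e = r := block_eq_of_shared hw he hr (Or.inl (Fin.ext hr1.symm))
        rw [her] at he2 horder
        omega
  obtain ⟨e, he, hek⟩ := hblock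
  have hej : jN m w = (e.2 : ℕ) := jN_spec m w hw he hek
  have horder : (e.1 : ℕ) < (e.2 : ℕ) := hw.1 e he
  have hnotk : ∀ i, 1 ≤ i → i ≤ kN m w → (e.2 : ℕ) ≠ 2*m+1-i := by
    intro i hi1 hik hceq
    by_cases hik' : i = kN m w
    · subst hik'
      rw [Rb, if_neg (by omega)] at hkspec
      exact hkspec ⟨e, he, by omega, by omega⟩
    · have hRb := hkmin i (by omega)
      rw [Rb, if_neg (by omega)] at hRb
      obtain ⟨r, hr, hr1, hr2⟩ := hRb
      have her : e ≠ r := by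
        intro hc; rw [hc] at hek; omega
      have := (hw.2.2.2 e he r hr her).2.2.2
      exact this (Fin.ext (by omega))
  have hub : (e.2 : ℕ) ≤ 2*m - kN m w := by
    have hlt : (e.2 : ℕ) < 2*m+1 := e.2.isLt
    by_contra hcon
    exact hnotk (2*m+1-(e.2:ℕ)) (by omega) (by omega) (by omega)
  exact ⟨e, he, hek, hej.symm, by omega, by omega⟩


lemma sw_fix {n : ℕ} {a b x : Fin n} (h1 : (x : ℕ) ≠ a) (h2 : (x : ℕ) ≠ b) :
    sw a b x = x :=
  sw_other (fun hc => h1 (congrArg Fin.val hc)) (fun hc => h2 (congrArg Fin.val hc))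

/-- Master lemma: all needed properties of the involution step. -/
lemma invW_spec {m : ℕ} {w : Finset (Fin (2*m+1) × Fin (2*m+1)) × Fin (2*m+1)}
    (hw : IsNPM w.1 w.2) (hne : w ≠ w0 m) :
    IsNPM (invW m w).1 (invW m w).2 ∧ invW m w ≠ w0 m ∧
      nsign (invW m w).1 (invW m w).2 = - nsign w.1 w.2 ∧ invW m (invW m w) = w := by
  classical
  obtain ⟨hkspec, hkmin⟩ := kN_eq m w hw
  obtain ⟨hkm, e, he, hek, hej, hjlo, hjhi⟩ := sel_spec hw hne
  have haN : (aN m w = jN m w ∧ (jN m w - kN m w) % 2 = 1) ∨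
      (aN m w = jN m w - 1 ∧ (jN m w - kN m w) % 2 = 0) := by
    rw [aN]
    by_cases h : (jN m w - kN m w) % 2 = 1
    · exact Or.inl ⟨if_pos h, h⟩
    · exact Or.inr ⟨if_neg h, by omega⟩
  have hbounds : kN m w + 1 ≤ aN m w ∧ aN m w + 1 ≤ 2*m - kN m w := by
    rcases haN with ⟨hA, hO⟩ | ⟨hA, hO⟩ <;> omega
  have hlt : aN m w + 1 < 2*m+1 := by omega
  set aF : Fin (2*m+1) := ⟨aN m w, by omega⟩ with haF
  set bF : Fin (2*m+1) := ⟨aN m w + 1, hlt⟩ with hbF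
  have hab : (aF : ℕ) + 1 = (bF : ℕ) := rfl
  have haFv : (aF : ℕ) = aN m w := rfl
  have hbFv : (bF : ℕ) = aN m w + 1 := rfl
  -- the swapped positions do not form a block
  have hnob : (aF, bF) ∉ w.1 := by
    intro hB
    rcases haN with ⟨hA, hO⟩ | ⟨hA, hO⟩
    · have hsh : e = (aF, bF) :=
        block_eq_of_shared hw he hB (Or.inr (Or.inr (Or.inl (Fin.ext (by
          show (e.2 : ℕ) = (aF : ℕ); omega)))))
      have : (e.1 : ℕ) = (aF : ℕ) := by rw [hsh]
      have : (e.1 : ℕ) = aN m w := this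
      omega
    · have hsh : e = (aF, bF) :=
        block_eq_of_shared hw he hB (Or.inr (Or.inr (Or.inr (Fin.ext (by
          show (e.2 : ℕ) = (bF : ℕ); show (e.2 : ℕ) = aN m w + 1; omega)))))
      have : (e.1 : ℕ) = aN m w := by rw [hsh]
      omega
  -- description of the image
  have hw' : invW m w = (w.1.image (Fm aF bF), sw aF bF w.2) := by
    rw [invW, dif_pos hlt]
  have hNPM' : IsNPM (invW m w).1 (invW m w).2 := by
    rw [hw']; exact isNPM_image hab hw hnob
  have hsign : nsign (invW m w).1 (invW m w).2 = - nsign w.1 w.2 := by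
    rw [hw']; exact nsign_image hab hw hnob
  -- the rainbow prefix is preserved, and item `kN m w` is still missing
  have hRblow : ∀ c < kN m w, Rb m (invW m w) c := by
    intro c hc
    have hRc := hkmin c hc
    by_cases hc0 : c = 0
    · subst hc0
      rw [Rb, if_pos rfl] at hRc ⊢
      rw [hw']
      show sw aF bF w.2 = _
      rw [hRc]
      exact sw_fix (by show (0:ℕ) ≠ aN m w; omega) (by show (0:ℕ) ≠ aN m w + 1; omega)
    · rw [Rb, if_neg hc0] at hRc ⊢
      obtain ⟨r, hr, hr1, hr2⟩ := hRc
      refine ⟨Fm aF bF r, by rw [hw']; exact Finset.mem_image_of_mem _ hr, ?_, ?_⟩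
      · show ((sw aF bF r.1 : Fin (2*m+1)) : ℕ) = c
        rw [sw_fix (by omega) (by omega)]
        exact hr1
      · show ((sw aF bF r.2 : Fin (2*m+1)) : ℕ) = 2*m+1-c
        rw [sw_fix (by omega) (by omega)]
        exact hr2
  have hRbk : ¬ Rb m (invW m w) (kN m w) := by
    by_cases hk0 : kN m w = 0
    · rw [Rb, hk0, if_pos rfl, hw']
      intro hc
      rw [Rb, hk0, if_pos rfl] at hkspec
      apply hkspec
      have := congrArg (sw aF bF) hc
      rw [sw_invol hab] at this
      rw [this]
      exact sw_fix (by show (0:ℕ) ≠ aN m w; omega) (by show (0:ℕ) ≠ aN m w + 1; omega)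
    · rw [Rb, if_neg hk0, hw']
      rintro ⟨e', he', h1, h2⟩
      obtain ⟨e0, he0, rfl⟩ := Finset.mem_image.mp he'
      rw [Rb, if_neg hk0] at hkspec
      apply hkspec
      refine ⟨e0, he0, ?_, ?_⟩
      · exact (sw_val_eq (by omega) (by omega)).mp h1
      · exact (sw_val_eq (by omega) (by omega)).mp h2
  -- depth is preserved
  have hkN' : kN m (invW m w) = kN m w := by
    rw [kN, dif_pos (exists_not_Rb m _ hNPM')]
    rw [Nat.find_eq_iff]
    exact ⟨hRbk, fun c hc => not_not_intro (hRblow c hc)⟩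
  -- the new partner of `kN m w`
  have hFme : Fm aF bF e ∈ (invW m w).1 := by
    rw [hw']; exact Finset.mem_image_of_mem _ he
  have hFme1 : ((Fm aF bF e).1 : ℕ) = kN m (invW m w) := by
    rw [hkN']
    exact (sw_val_eq (by omega) (by omega)).mpr hek
  have hjN' : jN m (invW m w) = ((sw aF bF e.2 : Fin (2*m+1)) : ℕ) :=
    jN_spec m _ hNPM' hFme hFme1
  -- compute the new partner value and the new swap position
  have hswe2 : ((sw aF bF e.2 : Fin (2*m+1)) : ℕ)
      = (if (e.2 : ℕ) = aN m w then aN m w + 1 else if (e.2:ℕ) = aN m w + 1 then aN m w else (e.2:ℕ)) := by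
    rw [sw_val]
  have haN' : aN m (invW m w) = aN m w := by
    rcases haN with ⟨hA, hO⟩ | ⟨hA, hO⟩
    · have hval : (if (e.2:ℕ) = aN m w then aN m w + 1
          else if (e.2:ℕ) = aN m w + 1 then aN m w else (e.2:ℕ)) = aN m w + 1 :=
        if_pos (by omega)
      rw [aN, hkN', hjN', hswe2, hval, if_neg (by omega)]
      omega
    · have hval : (if (e.2:ℕ) = aN m w then aN m w + 1
          else if (e.2:ℕ) = aN m w + 1 then aN m w else (e.2:ℕ)) = aN m w := by
        rw [if_neg (by omega), if_pos (by omega)]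
      rw [aN, hkN', hjN', hswe2, hval, if_pos (by omega)]
  -- not the rainbow
  have hnew0 : invW m w ≠ w0 m := by
    intro hc
    rw [hc] at hRbk
    exact hRbk (Rb_w0 m hkm)
  -- involution
  have hinv : invW m (invW m w) = w := by
    have hlt' : aN m (invW m w) + 1 < 2*m+1 := by rw [haN']; exact hlt
    rw [invW, dif_pos hlt']
    have haF' : (⟨aN m (invW m w), by omega⟩ : Fin (2*m+1)) = aF :=
      Fin.ext (by show aN m (invW m w) = aN m w; rw [haN'])
    have hbF' : (⟨aN m (invW m w) + 1, hlt'⟩ : Fin (2*m+1)) = bF :=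
      Fin.ext (by show aN m (invW m w) + 1 = aN m w + 1; rw [haN'])
    rw [haF', hbF', hw']
    refine Prod.ext ?_ (sw_invol hab)
    show (w.1.image (Fm aF bF)).image (Fm aF bF) = w.1
    rw [Finset.image_image]
    have hid : Fm aF bF ∘ Fm aF bF = id := funext (fun x => Fm_invol hab x)
    rw [hid, Finset.image_id]
  exact ⟨hNPM', hnew0, hsign, hinv⟩

end NPMaux

open NPMaux

/-- For any odd positive integer `p = 2m + 1`, the signed sum over all near-perfect
matchings of `{1, …, p}` equals `1`. -/
theorem signed_sum_of_matchings_odd (m : ℕ) :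
    ∑ w ∈ NPMs (2 * m + 1), nsign w.1 w.2 = 1 := by
  classical
  have hw0mem : w0 m ∈ NPMs (2*m+1) :=
    Finset.mem_filter.mpr ⟨Finset.mem_univ _, isNPM_w0 m⟩
  rw [← Finset.add_sum_erase _ (fun w => nsign w.1 w.2) hw0mem]
  have hzero : ∑ w ∈ (NPMs (2*m+1)).erase (w0 m), nsign w.1 w.2 = 0 := by
    refine Finset.sum_involution (fun w _ => invW m w) ?_ ?_ ?_ ?_
    · intro w hwmem
      obtain ⟨hne, hmem⟩ := Finset.mem_erase.mp hwmem
      have hw : IsNPM w.1 w.2 := (Finset.mem_filter.mp hmem).2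
      obtain ⟨-, -, hs, -⟩ := invW_spec hw hne
      rw [hs]; ring
    · intro w hwmem hne0 heq
      obtain ⟨hne, hmem⟩ := Finset.mem_erase.mp hwmem
      have hw : IsNPM w.1 w.2 := (Finset.mem_filter.mp hmem).2
      obtain ⟨-, -, hs, -⟩ := invW_spec hw hne
      have heq' : invW m w = w := heq
      rw [heq'] at hs
      exact hne0 (by linarith)
    · intro w hwmem
      obtain ⟨hne, hmem⟩ := Finset.mem_erase.mp hwmem
      have hw : IsNPM w.1 w.2 := (Finset.mem_filter.mp hmem).2
      obtain ⟨hNPM', hnew0, -, -⟩ := invW_spec hw hne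
      exact Finset.mem_erase.mpr ⟨hnew0, Finset.mem_filter.mpr ⟨Finset.mem_univ _, hNPM'⟩⟩
    · intro w hwmem
      obtain ⟨hne, hmem⟩ := Finset.mem_erase.mp hwmem
      have hw : IsNPM w.1 w.2 := (Finset.mem_filter.mp hmem).2
      obtain ⟨-, -, -, hinv⟩ := invW_spec hw hne
      exact hinv
  rw [hzero, add_zero]
  exact nsign_w0 m
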